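/- arXiv:1301.7153 — 5 statements merged into one kernel-verified Lean document; each statement's English description precedes it below -/
import Mathlib

section
/- In any weak concurrent Kleene algebra, for all elements s and t, (s*∥t*)* = s*∥t*. -/
/-- Operations of a weak concurrent Kleene algebra. -/
class WCKAOps (K : Type*) where
  add : K → K → K
  seq : K → K → K
  par : K → K → K
  star : K → K
  zero : K
  one : K

namespace WCKAOps

variable {K : Type*} [WCKAOps K]

/-- The natural order: `x ≤ y` iff `x + y = y`. -/
def kle (x y : K) : Prop := add x y = y

end WCKAOps

open WCKAOps

/-- Axioms of a weak concurrent Kleene algebra. -/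
class WCKA (K : Type*) [WCKAOps K] : Prop where
  add_assoc : ∀ x y z : K, add (add x y) z = add x (add y z)
  add_comm : ∀ x y : K, add x y = add y x
  add_idem : ∀ x : K, add x x = x
  add_zero : ∀ x : K, add x zero = x
  seq_assoc : ∀ x y z : K, seq (seq x y) z = seq x (seq y z)
  one_seq : ∀ x : K, seq one x = x
  seq_one : ∀ x : K, seq x one = x
  zero_seq : ∀ x : K, seq zero x = zero
  add_seq : ∀ x y z : K, seq (add x y) z = add (seq x z) (seq y z)
  seq_subdistrib : ∀ x y z : K, kle (add (seq x y) (seq x z)) (seq x (add y z))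
  star_unfold : ∀ x : K, add one (seq x (star x)) = star x
  star_induction : ∀ x y : K, kle (seq x y) y → kle (seq (star x) y) y
  par_assoc : ∀ x y z : K, par (par x y) z = par x (par y z)
  par_comm : ∀ x y : K, par x y = par y x
  par_one_one : par (one : K) one = one
  par_subdistrib : ∀ x y z : K, kle (add (par x y) (par x z)) (par x (add y z))
  interchange : ∀ x y u v : K, kle (seq (par x y) (par u v)) (par (seq x u) (seq y v))

section Aux
variable {K : Type*} [WCKAOps K] [WCKA K]
open WCKA

lemma kle_refl (x : K) : kle x x := WCKA.add_idem x

lemma kle_trans {x y z : K} (h1 : kle x y) (h2 : kle y z) : kle x z := by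
  unfold kle at *; rw [← h2, ← WCKA.add_assoc, h1]

lemma kle_antisymm {x y : K} (h1 : kle x y) (h2 : kle y x) : x = y := by
  unfold kle at *; rw [← h1, WCKA.add_comm, h2]

lemma kle_add_left (x y : K) : kle x (add x y) := by
  unfold kle; rw [← WCKA.add_assoc, WCKA.add_idem]

lemma kle_add_right (x y : K) : kle y (add x y) := by
  rw [WCKA.add_comm]; exact kle_add_left y x

lemma add_kle {x y z : K} (h1 : kle x z) (h2 : kle y z) : kle (add x y) z := by
  unfold kle at *; rw [WCKA.add_assoc, h2, h1]

lemma seq_mono_right {y z : K} (x : K) (h : kle y z) : kle (seq x y) (seq x z) := by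
  have := WCKA.seq_subdistrib x y z
  rw [(h : add y z = z)] at this
  exact kle_trans (kle_add_left _ _) this

lemma seq_mono_left {x y : K} (z : K) (h : kle x y) : kle (seq x z) (seq y z) := by
  unfold kle at *; rw [← WCKA.add_seq, h]

lemma par_mono_right {y z : K} (x : K) (h : kle y z) : kle (par x y) (par x z) := by
  have := WCKA.par_subdistrib x y z
  rw [(h : add y z = z)] at this
  exact kle_trans (kle_add_left _ _) this

lemma par_mono_left {x y : K} (z : K) (h : kle x y) : kle (par x z) (par y z) := by
  rw [WCKA.par_comm x z, WCKA.par_comm y z]; exact par_mono_right z h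

lemma one_kle_star (x : K) : kle one (star x) := by
  show add one (star x) = star x
  nth_rewrite 1 [← WCKA.star_unfold x]
  rw [← WCKA.add_assoc, WCKA.add_idem, WCKA.star_unfold]

lemma seq_star_kle_star (x : K) : kle (seq x (star x)) (star x) := by
  show add (seq x (star x)) (star x) = star x
  nth_rewrite 2 [← WCKA.star_unfold x]
  rw [WCKA.add_comm one, ← WCKA.add_assoc, WCKA.add_idem, WCKA.add_comm, WCKA.star_unfold]

lemma star_seq_star_kle (x : K) : kle (seq (star x) (star x)) (star x) :=
  WCKA.star_induction x (star x) (seq_star_kle_star x)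

lemma kle_one_sq {x : K} (h1 : kle one x) (h2 : kle (seq x x) x) : star x = x := by
  apply kle_antisymm
  · -- star x ≤ x
    have hx : kle (seq (star x) x) x := WCKA.star_induction x x h2
    have : kle (star x) (seq (star x) x) := by
      have := seq_mono_right (star x) h1
      rwa [WCKA.seq_one] at this
    exact kle_trans this hx
  · -- x ≤ star x
    have : kle x (seq x (star x)) := by
      have := seq_mono_right x (one_kle_star x)
      rwa [WCKA.seq_one] at this
    exact kle_trans this (seq_star_kle_star x)

end Aux

/-- In any weak concurrent Kleene algebra, `(s*∥t*)* = s*∥t*`. -/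
theorem wcka_star_par_star {K : Type*} [WCKAOps K] [WCKA K] (s t : K) :
    star (par (star s) (star t)) = par (star s) (star t) := by
  apply kle_one_sq
  · have h1 : kle (par (one:K) one) (par (star s) (star t)) :=
      kle_trans (par_mono_left one (one_kle_star s)) (par_mono_right (star s) (one_kle_star t))
    rwa [WCKA.par_one_one] at h1
  · have h2 := WCKA.interchange (star s) (star t) (star s) (star t)
    have h3 : kle (par (seq (star s) (star s)) (seq (star t) (star t))) (par (star s) (star t)) :=
      kle_trans (par_mono_left _ (star_seq_star_kle s)) (par_mono_right _ (star_seq_star_kle t))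
    exact kle_trans h2 h3
end

section
/- Let K be a weak concurrent Kleene algebra in which the concurrency operator additionally distributes over choice, i.e. u∥(v+w) = u∥v + u∥w for all u, v, w. Let x ∈ K be an element such that (x·a)∥1 = 0 for every a ∈ K. Then for every natural number n, 1∥(1+x)^n = 1, where powers are defined by z^0 = 1 and z^(n+1) = z·z^n. -/
open WCKAOps

/-- Powers: `z^0 = 1`, `z^(n+1) = z·z^n`. -/
def wpow {K : Type*} [WCKAOps K] (z : K) : ℕ → K
  | 0 => WCKAOps.one
  | n + 1 => WCKAOps.seq z (wpow z n)

/-- If `∥` distributes over `+` and `(x·a)∥1 = 0` for all `a`, then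
`1∥(1+x)^n = 1` for every natural number `n`. -/
theorem wcka_one_par_pow {K : Type*} [WCKAOps K] [WCKA K]
    (hdist : ∀ u v w : K, par u (add v w) = add (par u v) (par u w))
    (x : K) (hx : ∀ a : K, par (seq x a) one = zero) :
    ∀ n : ℕ, par one (wpow (add one x) n) = one := by
  intro n
  induction n with
  | zero => simpa [wpow] using WCKA.par_one_one
  | succ n ih =>
    have h1 : wpow (add one x) (n+1) = add (wpow (add one x) n) (seq x (wpow (add one x) n)) := by
      simp [wpow, WCKA.add_seq, WCKA.one_seq]
    rw [h1, hdist, ih, WCKA.par_comm (one : K), hx, WCKA.add_zero]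
end

section
/- Let K be a weak concurrent Kleene algebra in which the concurrency operator additionally distributes over choice, i.e. u∥(v+w) = u∥v + u∥w for all u, v, w. Let x, y ∈ K satisfy: (x·a)∥(y·b) = (x∥y)·(a∥b) for all a, b ∈ K; (x·a)∥1 = 0 for all a ∈ K; and 1∥(y·b) = 0 for all b ∈ K. Then for all natural numbers m, n: (1+x)^m ∥ (1+y)^n = (1 + x∥y)^(min(m,n)), where powers are defined by z^0 = 1 and z^(n+1) = z·z^n. -/
open WCKAOps

section WCKAAux

variable {K : Type*} [WCKAOps K] [WCKA K]

lemma wcka_kle_trans {a b c : K} (h1 : kle a b) (h2 : kle b c) : kle a c := by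
  have h1' : add a b = b := h1
  have h2' : add b c = c := h2
  show add a c = c
  rw [← h2', ← WCKA.add_assoc, h1']

lemma wcka_kle_add_left (a b : K) : kle a (add a b) := by
  show add a (add a b) = add a b
  rw [← WCKA.add_assoc, WCKA.add_idem]

lemma wcka_kle_add_right (a b : K) : kle b (add a b) := by
  show add b (add a b) = add a b
  rw [WCKA.add_comm a b, ← WCKA.add_assoc, WCKA.add_idem]

lemma wcka_add_kle {a b c : K} (h1 : kle a c) (h2 : kle b c) : kle (add a b) c := by
  have h1' : add a c = c := h1
  have h2' : add b c = c := h2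
  show add (add a b) c = c
  rw [WCKA.add_assoc, h2', h1']

lemma wcka_zero_kle (a : K) : kle (zero : K) a := by
  show add zero a = a
  rw [WCKA.add_comm, WCKA.add_zero]

lemma wcka_seq_mono_right {a b : K} (z : K) (h : kle a b) : kle (seq z a) (seq z b) := by
  have h' : add a b = b := h
  have h2 := WCKA.seq_subdistrib z a b
  rw [h'] at h2
  exact wcka_kle_trans (wcka_kle_add_left _ _) h2

lemma wcka_par_mono_right {a b : K} (z : K) (h : kle a b) : kle (par z a) (par z b) := by
  have h' : add a b = b := h
  have h2 := WCKA.par_subdistrib z a b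
  rw [h'] at h2
  exact wcka_kle_trans (wcka_kle_add_left _ _) h2

lemma wcka_par_mono_left {a b : K} (z : K) (h : kle a b) : kle (par a z) (par b z) := by
  rw [WCKA.par_comm a z, WCKA.par_comm b z]
  exact wcka_par_mono_right z h

lemma wpow_one_succ (z : K) (m : ℕ) :
    wpow (add one z) (m + 1) = add (wpow (add one z) m) (seq z (wpow (add one z) m)) := by
  show seq (add one z) (wpow (add one z) m) = _
  rw [WCKA.add_seq, WCKA.one_seq]

lemma wpow_kle_succ (z : K) (m : ℕ) :
    kle (wpow (add one z) m) (wpow (add one z) (m + 1)) := by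
  rw [wpow_one_succ]
  exact wcka_kle_add_left _ _

end WCKAAux

/-- The key intermediate identity in the serialisation of Rabin's protocol:
under the stated synchronisation assumptions,
`(1+x)^m ∥ (1+y)^n = (1 + x∥y)^(min m n)`. -/
theorem wcka_pow_par_pow {K : Type*} [WCKAOps K] [WCKA K]
    (hdist : ∀ u v w : K, par u (add v w) = add (par u v) (par u w))
    (x y : K)
    (hsync : ∀ a b : K, par (seq x a) (seq y b) = seq (par x y) (par a b))
    (hx : ∀ a : K, par (seq x a) one = zero)
    (hy : ∀ b : K, par one (seq y b) = zero) :
    ∀ m n : ℕ,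
      par (wpow (add one x) m) (wpow (add one y) n) =
        wpow (add one (par x y)) (min m n) := by

  have hdist' : ∀ u v w : K, par (add v w) u = add (par v u) (par w u) := by
    intro u v w
    rw [WCKA.par_comm (add v w) u, hdist, WCKA.par_comm u v, WCKA.par_comm u w]
  -- (1+x)^m ∥ 1 = 1
  have par_one_P : ∀ m : ℕ, par (wpow (add one x) m) one = one := by
    intro m
    induction m with
    | zero => exact WCKA.par_one_one
    | succ m ih =>
      rw [wpow_one_succ, hdist', ih, hx, WCKA.add_zero]
  -- 1 ∥ (1+y)^n = 1
  have one_par_Q : ∀ n : ℕ, par (one : K) (wpow (add one y) n) = one := by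
    intro n
    induction n with
    | zero => exact WCKA.par_one_one
    | succ n ih =>
      rw [wpow_one_succ, hdist, ih, hy, WCKA.add_zero]
  -- (1+x)^m ∥ (y·b) ≤ (x∥y)·((1+x)^m ∥ b)
  have B1 : ∀ (m : ℕ) (b : K),
      kle (par (wpow (add one x) m) (seq y b))
          (seq (par x y) (par (wpow (add one x) m) b)) := by
    intro m
    induction m with
    | zero =>
      intro b
      show kle (par one (seq y b)) _
      rw [hy]
      exact wcka_zero_kle _
    | succ m ih =>
      intro b
      rw [wpow_one_succ, hdist', hsync]
      apply wcka_add_kle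
      · exact wcka_kle_trans (ih b)
          (wcka_seq_mono_right _ (wcka_par_mono_left b (wcka_kle_add_left _ _)))
      · exact wcka_seq_mono_right _ (wcka_par_mono_left b (wcka_kle_add_left _ _))
  -- (x·a) ∥ (1+y)^n ≤ (x∥y)·(a ∥ (1+y)^n)
  have B2 : ∀ (n : ℕ) (a : K),
      kle (par (seq x a) (wpow (add one y) n))
          (seq (par x y) (par a (wpow (add one y) n))) := by
    intro n
    induction n with
    | zero =>
      intro a
      show kle (par (seq x a) one) _
      rw [hx]
      exact wcka_zero_kle _
    | succ n ih =>
      intro a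
      rw [wpow_one_succ, hdist, hsync]
      apply wcka_add_kle
      · exact wcka_kle_trans (ih a)
          (wcka_seq_mono_right _ (wcka_par_mono_right a (wcka_kle_add_left _ _)))
      · exact wcka_seq_mono_right _ (wcka_par_mono_right a (wcka_kle_add_left _ _))
  intro m
  induction m with
  | zero =>
    intro n
    have : min 0 n = 0 := Nat.zero_min n
    rw [this]
    exact one_par_Q n
  | succ m ih =>
    intro n
    cases n with
    | zero =>
      have : min (m + 1) 0 = 0 := Nat.min_zero (m + 1)
      rw [this]
      exact par_one_P (m + 1)
    | succ n =>
      rw [Nat.succ_min_succ]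
      set Pm := wpow (add one x) m with hPm
      set Qn := wpow (add one y) n with hQn
      have hih : par Pm Qn = wpow (add one (par x y)) (min m n) := ih n
      have expand :
          par (wpow (add one x) (m + 1)) (wpow (add one y) (n + 1)) =
            add (add (par Pm Qn) (par (seq x Pm) Qn))
                (add (par Pm (seq y Qn)) (par (seq x Pm) (seq y Qn))) := by
        rw [wpow_one_succ x m, wpow_one_succ y n, hdist, hdist', hdist']
      have hT4 : par (seq x Pm) (seq y Qn) =
          seq (par x y) (wpow (add one (par x y)) (min m n)) := by
        rw [hsync, hih]
      have hT2 : add (par (seq x Pm) Qn)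
          (seq (par x y) (wpow (add one (par x y)) (min m n))) =
          seq (par x y) (wpow (add one (par x y)) (min m n)) := by
        have := B2 n Pm
        rw [hih] at this
        exact this
      have hT3 : add (par Pm (seq y Qn))
          (seq (par x y) (wpow (add one (par x y)) (min m n))) =
          seq (par x y) (wpow (add one (par x y)) (min m n)) := by
        have := B1 m Qn
        rw [hih] at this
        exact this
      rw [expand, hT4, WCKA.add_assoc, hT3, hT2, hih,
          ← wpow_one_succ (par x y) (min m n)]
end

section
/- Simulation equivalence of automata is a congruence with respect to the sum of automata: if P ≤ Q and P' ≤ Q' (all four automata satisfying the initiality condition), then P + P' ≤ Q + Q'. Consequently, if P ≡ Q and P' ≡ Q', then P + P' ≡ Q + Q'. -/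
/-- An automaton over an alphabet `A`: a set (type) of states, a labelled
transition relation, an initial state and a set of final states. -/
structure Automaton (A : Type) where
  State : Type
  trans : State → A → State → Prop
  init : State
  final : Set State

variable {A : Type}

/-- `TauReach internal P x y` holds if there is a (possibly empty) path from `x`
to `y` all of whose labels are internal actions. -/
def TauReach (internal : A → Prop) (P : Automaton A) : P.State → P.State → Prop :=
  Relation.ReflTransGen (fun x y => ∃ a, internal a ∧ P.trans x a y)

/-- `S` is an η-simulation from `P` to `Q`. -/
def IsEtaSim (internal : A → Prop) (P Q : Automaton A)
    (S : P.State → Q.State → Prop) : Prop :=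
  S P.init Q.init ∧
  (∀ x y a x', S x y → P.trans x a x' →
    (internal a → ∃ y', TauReach internal Q y y' ∧ S x' y') ∧
    (¬ internal a → ∃ y₁ y', TauReach internal Q y y₁ ∧ Q.trans y₁ a y' ∧
        S x y₁ ∧ S x' y')) ∧
  (∀ x y, S x y → x ∈ P.final → y ∈ Q.final)

/-- `S` is rooted: only the initial state of `Q` is related to the initial state of `P`. -/
def IsRooted (P Q : Automaton A) (S : P.State → Q.State → Prop) : Prop :=
  ∀ y, S P.init y → y = Q.init

/-- `P ≤ Q`: there is a rooted η-simulation from `P` to `Q`. -/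
def Sim (internal : A → Prop) (P Q : Automaton A) : Prop :=
  ∃ S, IsEtaSim internal P Q S ∧ IsRooted P Q S

/-- Simulation equivalence. -/
def SimEquiv (internal : A → Prop) (P Q : Automaton A) : Prop :=
  Sim internal P Q ∧ Sim internal Q P

/-- The initiality condition: no transition leads into the initial state. -/
def Initiality (P : Automaton A) : Prop := ∀ x a, ¬ P.trans x a P.init

/-- The reachability condition: every state is reachable from the initial state. -/
def Reachability (P : Automaton A) : Prop :=
  ∀ x, Relation.ReflTransGen (fun u v => ∃ a, P.trans u a v) P.init x

/-- Sum of two automata: disjoint union with the initial states merged. -/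
def Automaton.sum (P Q : Automaton A) : Automaton A where
  State := Option ({x : P.State // x ≠ P.init} ⊕ {y : Q.State // y ≠ Q.init})
  init := none
  trans := fun s a t =>
    match s, t with
    | none, some (Sum.inl x') => P.trans P.init a x'.1
    | none, some (Sum.inr y') => Q.trans Q.init a y'.1
    | some (Sum.inl x), some (Sum.inl x') => P.trans x.1 a x'.1
    | some (Sum.inr y), some (Sum.inr y') => Q.trans y.1 a y'.1
    | _, _ => False
  final := {s | match s with
    | none => P.init ∈ P.final ∨ Q.init ∈ Q.final
    | some (Sum.inl x) => x.1 ∈ P.final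
    | some (Sum.inr y) => y.1 ∈ Q.final}

/-- Sequential composition of two automata: final states of `P` are identified
with (a copy of) the initial state of `Q`. -/
def Automaton.seqComp (P Q : Automaton A) : Automaton A where
  State := P.State ⊕ {y : Q.State // y ≠ Q.init}
  init := Sum.inl P.init
  trans := fun s a t =>
    match s, t with
    | Sum.inl x, Sum.inl x' => P.trans x a x'
    | Sum.inl x, Sum.inr y' => x ∈ P.final ∧ Q.trans Q.init a y'.1
    | Sum.inr y, Sum.inr y' => Q.trans y.1 a y'.1
    | _, _ => False
  final := {s | match s with
    | Sum.inl x => x ∈ P.final ∧ Q.init ∈ Q.final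
    | Sum.inr y => y.1 ∈ Q.final}

open Classical in
/-- Embedding of the states of `P` into the states of `P.sum P'`. -/
noncomputable def embL (P P' : Automaton A) (x : P.State) : (P.sum P').State :=
  if h : x = P.init then none else some (Sum.inl ⟨x, h⟩)

open Classical in
/-- Embedding of the states of `P'` into the states of `P.sum P'`. -/
noncomputable def embR (P P' : Automaton A) (x : P'.State) : (P.sum P').State :=
  if h : x = P'.init then none else some (Sum.inr ⟨x, h⟩)

lemma embL_init (P P' : Automaton A) : embL P P' P.init = none := by
  unfold embL; exact dif_pos rfl

lemma embR_init (P P' : Automaton A) : embR P P' P'.init = none := by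
  unfold embR; exact dif_pos rfl

lemma embL_ne {P P' : Automaton A} {x : P.State} (hx : x ≠ P.init) :
    embL P P' x = some (Sum.inl ⟨x, hx⟩) := by
  unfold embL; exact dif_neg hx

lemma embR_ne {P P' : Automaton A} {x : P'.State} (hx : x ≠ P'.init) :
    embR P P' x = some (Sum.inr ⟨x, hx⟩) := by
  unfold embR; exact dif_neg hx

lemma trans_embL {P P' : Automaton A} (hP : Initiality P) {x a z} (h : P.trans x a z) :
    (P.sum P').trans (embL P P' x) a (embL P P' z) := by
  have hz : z ≠ P.init := fun hz => hP x a (hz ▸ h)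
  rw [embL_ne hz]
  by_cases hx : x = P.init
  · subst hx; rw [embL_init]; exact h
  · rw [embL_ne hx]; exact h

lemma trans_embR {P P' : Automaton A} (hP' : Initiality P') {x a z} (h : P'.trans x a z) :
    (P.sum P').trans (embR P P' x) a (embR P P' z) := by
  have hz : z ≠ P'.init := fun hz => hP' x a (hz ▸ h)
  rw [embR_ne hz]
  by_cases hx : x = P'.init
  · subst hx; rw [embR_init]; exact h
  · rw [embR_ne hx]; exact h

lemma tauReach_embL (internal : A → Prop) {P : Automaton A} (P' : Automaton A)
    (hP : Initiality P) {y y'} (h : TauReach internal P y y') :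
    TauReach internal (P.sum P') (embL P P' y) (embL P P' y') := by
  induction h with
  | refl => exact Relation.ReflTransGen.refl
  | tail _ hstep ih =>
    obtain ⟨a, ha, ht⟩ := hstep
    exact ih.tail ⟨a, ha, trans_embL hP ht⟩

lemma tauReach_embR (internal : A → Prop) (P : Automaton A) {P' : Automaton A}
    (hP' : Initiality P') {y y'} (h : TauReach internal P' y y') :
    TauReach internal (P.sum P') (embR P P' y) (embR P P' y') := by
  induction h with
  | refl => exact Relation.ReflTransGen.refl
  | tail _ hstep ih =>
    obtain ⟨a, ha, ht⟩ := hstep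
    exact ih.tail ⟨a, ha, trans_embR hP' ht⟩

lemma sim_sum (internal : A → Prop) {P Q P' Q' : Automaton A}
    (hQ : Initiality Q) (hQ' : Initiality Q')
    (h1 : Sim internal P Q) (h2 : Sim internal P' Q') :
    Sim internal (P.sum P') (Q.sum Q') := by
  obtain ⟨S, hS, hSr⟩ := h1
  obtain ⟨S', hS', hS'r⟩ := h2
  refine ⟨fun s t => (∃ x y, S x y ∧ s = embL P P' x ∧ t = embL Q Q' y) ∨
      (∃ x y, S' x y ∧ s = embR P P' x ∧ t = embR Q Q' y), ⟨?_, ?_, ?_⟩, ?_⟩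
  · exact Or.inl ⟨P.init, Q.init, hS.1, (embL_init P P').symm, (embL_init Q Q').symm⟩
  · rintro s t a s' (⟨x, y, hxy, rfl, rfl⟩ | ⟨x, y, hxy, rfl, rfl⟩) htr
    · -- left copy
      by_cases hx : x = P.init
      · subst hx
        rw [embL_init] at htr
        have hy : y = Q.init := hSr y hxy
        subst hy
        rcases s' with _ | (⟨x', hx'⟩ | ⟨z', hz'⟩)
        · exact htr.elim
        · -- transition into the left copy
          have htr' : P.trans P.init a x' := htr
          have hcl := (hS.2.1 P.init Q.init a x' hS.1 htr')
          constructor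
          · intro hint
            obtain ⟨y', hty, hxy'⟩ := hcl.1 hint
            refine ⟨embL Q Q' y', ?_, Or.inl ⟨x', y', hxy', (embL_ne hx').symm, rfl⟩⟩
            exact tauReach_embL internal Q' hQ hty
          · intro hext
            obtain ⟨y₁, y', hty, htq, hxy₁, hxy'⟩ := hcl.2 hext
            refine ⟨embL Q Q' y₁, embL Q Q' y', ?_, trans_embL hQ htq,
              Or.inl ⟨P.init, y₁, hxy₁, rfl, rfl⟩,
              Or.inl ⟨x', y', hxy', (embL_ne hx').symm, rfl⟩⟩
            exact tauReach_embL internal Q' hQ hty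
        · -- transition into the right copy
          have htr' : P'.trans P'.init a z' := htr
          have hcl := (hS'.2.1 P'.init Q'.init a z' hS'.1 htr')
          constructor
          · intro hint
            obtain ⟨y', hty, hxy'⟩ := hcl.1 hint
            refine ⟨embR Q Q' y', ?_, Or.inr ⟨z', y', hxy', (embR_ne hz').symm, rfl⟩⟩
            rw [embL_init Q Q', ← embR_init Q Q']
            exact tauReach_embR internal Q hQ' hty
          · intro hext
            obtain ⟨y₁, y', hty, htq, hxy₁, hxy'⟩ := hcl.2 hext
            refine ⟨embR Q Q' y₁, embR Q Q' y', ?_, trans_embR hQ' htq,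
              Or.inr ⟨P'.init, y₁, hxy₁, (embL_init P P').trans (embR_init P P').symm, rfl⟩,
              Or.inr ⟨z', y', hxy', (embR_ne hz').symm, rfl⟩⟩
            rw [embL_init Q Q', ← embR_init Q Q']
            exact tauReach_embR internal Q hQ' hty
      · rw [embL_ne hx] at htr
        rcases s' with _ | (⟨x', hx'⟩ | ⟨z', hz'⟩)
        · exact htr.elim
        · have htr' : P.trans x a x' := htr
          have hcl := (hS.2.1 x y a x' hxy htr')
          constructor
          · intro hint
            obtain ⟨y', hty, hxy'⟩ := hcl.1 hint
            exact ⟨embL Q Q' y', tauReach_embL internal Q' hQ hty,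
              Or.inl ⟨x', y', hxy', (embL_ne hx').symm, rfl⟩⟩
          · intro hext
            obtain ⟨y₁, y', hty, htq, hxy₁, hxy'⟩ := hcl.2 hext
            exact ⟨embL Q Q' y₁, embL Q Q' y', tauReach_embL internal Q' hQ hty,
              trans_embL hQ htq,
              Or.inl ⟨x, y₁, hxy₁, rfl, rfl⟩,
              Or.inl ⟨x', y', hxy', (embL_ne hx').symm, rfl⟩⟩
        · exact htr.elim
    · -- right copy
      by_cases hx : x = P'.init
      · subst hx
        rw [embR_init] at htr
        have hy : y = Q'.init := hS'r y hxy
        subst hy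
        rcases s' with _ | (⟨x', hx'⟩ | ⟨z', hz'⟩)
        · exact htr.elim
        · -- transition into the left copy
          have htr' : P.trans P.init a x' := htr
          have hcl := (hS.2.1 P.init Q.init a x' hS.1 htr')
          constructor
          · intro hint
            obtain ⟨y', hty, hxy'⟩ := hcl.1 hint
            refine ⟨embL Q Q' y', ?_, Or.inl ⟨x', y', hxy', (embL_ne hx').symm, rfl⟩⟩
            rw [embR_init Q Q', ← embL_init Q Q']
            exact tauReach_embL internal Q' hQ hty
          · intro hext
            obtain ⟨y₁, y', hty, htq, hxy₁, hxy'⟩ := hcl.2 hext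
            refine ⟨embL Q Q' y₁, embL Q Q' y', ?_, trans_embL hQ htq,
              Or.inl ⟨P.init, y₁, hxy₁, (embR_init P P').trans (embL_init P P').symm, rfl⟩,
              Or.inl ⟨x', y', hxy', (embL_ne hx').symm, rfl⟩⟩
            rw [embR_init Q Q', ← embL_init Q Q']
            exact tauReach_embL internal Q' hQ hty
        · -- transition into the right copy
          have htr' : P'.trans P'.init a z' := htr
          have hcl := (hS'.2.1 P'.init Q'.init a z' hS'.1 htr')
          constructor
          · intro hint
            obtain ⟨y', hty, hxy'⟩ := hcl.1 hint
            refine ⟨embR Q Q' y', ?_, Or.inr ⟨z', y', hxy', (embR_ne hz').symm, rfl⟩⟩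
            exact tauReach_embR internal Q hQ' hty
          · intro hext
            obtain ⟨y₁, y', hty, htq, hxy₁, hxy'⟩ := hcl.2 hext
            refine ⟨embR Q Q' y₁, embR Q Q' y', ?_, trans_embR hQ' htq,
              Or.inr ⟨P'.init, y₁, hxy₁, rfl, rfl⟩,
              Or.inr ⟨z', y', hxy', (embR_ne hz').symm, rfl⟩⟩
            exact tauReach_embR internal Q hQ' hty
      · rw [embR_ne hx] at htr
        rcases s' with _ | (⟨x', hx'⟩ | ⟨z', hz'⟩)
        · exact htr.elim
        · exact htr.elim
        · have htr' : P'.trans x a z' := htr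
          have hcl := (hS'.2.1 x y a z' hxy htr')
          constructor
          · intro hint
            obtain ⟨y', hty, hxy'⟩ := hcl.1 hint
            exact ⟨embR Q Q' y', tauReach_embR internal Q hQ' hty,
              Or.inr ⟨z', y', hxy', (embR_ne hz').symm, rfl⟩⟩
          · intro hext
            obtain ⟨y₁, y', hty, htq, hxy₁, hxy'⟩ := hcl.2 hext
            exact ⟨embR Q Q' y₁, embR Q Q' y', tauReach_embR internal Q hQ' hty,
              trans_embR hQ' htq,
              Or.inr ⟨x, y₁, hxy₁, rfl, rfl⟩,
              Or.inr ⟨z', y', hxy', (embR_ne hz').symm, rfl⟩⟩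
  · -- final states
    rintro s t (⟨x, y, hxy, rfl, rfl⟩ | ⟨x, y, hxy, rfl, rfl⟩) hfin
    · by_cases hx : x = P.init
      · subst hx
        have hy : y = Q.init := hSr y hxy
        subst hy
        rw [embL_init] at hfin
        rw [embL_init]
        have hfin' : P.init ∈ P.final ∨ P'.init ∈ P'.final := hfin
        rcases hfin' with h | h
        · exact Or.inl (hS.2.2 P.init Q.init hxy h)
        · exact Or.inr (hS'.2.2 P'.init Q'.init hS'.1 h)
      · rw [embL_ne hx] at hfin
        have hxf : x ∈ P.final := hfin
        have hyf : y ∈ Q.final := hS.2.2 x y hxy hxf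
        by_cases hy : y = Q.init
        · subst hy
          rw [embL_init]
          exact Or.inl hyf
        · rw [embL_ne hy]
          exact hyf
    · by_cases hx : x = P'.init
      · subst hx
        have hy : y = Q'.init := hS'r y hxy
        subst hy
        rw [embR_init] at hfin
        rw [embR_init]
        have hfin' : P.init ∈ P.final ∨ P'.init ∈ P'.final := hfin
        rcases hfin' with h | h
        · exact Or.inl (hS.2.2 P.init Q.init hS.1 h)
        · exact Or.inr (hS'.2.2 P'.init Q'.init hxy h)
      · rw [embR_ne hx] at hfin
        have hxf : x ∈ P'.final := hfin
        have hyf : y ∈ Q'.final := hS'.2.2 x y hxy hxf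
        by_cases hy : y = Q'.init
        · subst hy
          rw [embR_init]
          exact Or.inr hyf
        · rw [embR_ne hy]
          exact hyf
  · -- rootedness
    rintro t (⟨x, y, hxy, hxe, rfl⟩ | ⟨x, y, hxy, hxe, rfl⟩)
    · have hx : x = P.init := by
        by_contra hx
        rw [embL_ne hx] at hxe
        cases hxe
      subst hx
      have hy : y = Q.init := hSr y hxy
      subst hy
      exact embL_init Q Q'
    · have hx : x = P'.init := by
        by_contra hx
        rw [embR_ne hx] at hxe
        cases hxe
      subst hx
      have hy : y = Q'.init := hS'r y hxy
      subst hy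
      exact embR_init Q Q'

/-- Simulation (and hence simulation equivalence) is a congruence with respect
to the sum of automata: if `P ≤ Q` and `P' ≤ Q'` then `P + P' ≤ Q + Q'`;
consequently if `P ≡ Q` and `P' ≡ Q'` then `P + P' ≡ Q + Q'`. -/
theorem sim_sum_congruence {A : Type} (internal : A → Prop)
    (P Q P' Q' : Automaton A)
    (hP : Initiality P) (hQ : Initiality Q)
    (hP' : Initiality P') (hQ' : Initiality Q') :
    (Sim internal P Q → Sim internal P' Q' →
      Sim internal (P.sum P') (Q.sum Q')) ∧
    (SimEquiv internal P Q → SimEquiv internal P' Q' →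
      SimEquiv internal (P.sum P') (Q.sum Q')) := by
  refine ⟨fun h1 h2 => sim_sum internal hQ hQ' h1 h2, ?_⟩
  rintro ⟨h1, h2⟩ ⟨h1', h2'⟩
  exact ⟨sim_sum internal hQ hQ' h1 h1', sim_sum internal hP hP' h2 h2'⟩
end

section
/- For automata P and Q satisfying the reachability and initiality conditions, P ≤ Q if and only if P + Q ≡ Q. -/
variable {A : Type}

/-- For automata satisfying the reachability and initiality conditions,
`P ≤ Q` if and only if `P + Q ≡ Q`. -/
theorem sim_iff_sum_equiv {A : Type} (internal : A → Prop) (P Q : Automaton A)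
    (hPr : Reachability P) (hPi : Initiality P)
    (hQr : Reachability Q) (hQi : Initiality Q) :
    Sim internal P Q ↔ SimEquiv internal (P.sum Q) Q := by
  constructor
  · rintro ⟨S, ⟨hinit, htrans, hfin⟩, hroot⟩
    constructor
    · -- Sim (P.sum Q) Q
      refine ⟨fun s y => match s with
        | none => y = Q.init
        | some (Sum.inl x) => S x.1 y
        | some (Sum.inr z) => y = z.1, ⟨rfl, ?_, ?_⟩, fun y h => h⟩
      · rintro (_ | (x | z)) y a (_ | (x' | z')) hS ht
        · exact absurd ht (fun h => h)
        · -- none → inl x'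
          subst hS
          constructor
          · intro hi
            obtain ⟨y', hr, hS'⟩ := (htrans P.init Q.init a x'.1 hinit ht).1 hi
            exact ⟨y', hr, hS'⟩
          · intro hi
            obtain ⟨y₁, y', hr, htr, hS₁, hS'⟩ := (htrans P.init Q.init a x'.1 hinit ht).2 hi
            exact ⟨y₁, y', hr, htr, hroot y₁ hS₁, hS'⟩
        · -- none → inr z'
          subst hS
          constructor
          · intro hi
            exact ⟨z'.1, Relation.ReflTransGen.single ⟨a, hi, ht⟩, rfl⟩
          · intro _
            exact ⟨Q.init, z'.1, Relation.ReflTransGen.refl, ht, rfl, rfl⟩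
        · exact absurd ht (fun h => h)
        · exact htrans x.1 y a x'.1 hS ht
        · exact absurd ht (fun h => h)
        · exact absurd ht (fun h => h)
        · exact absurd ht (fun h => h)
        · subst hS
          constructor
          · intro hi
            exact ⟨z'.1, Relation.ReflTransGen.single ⟨a, hi, ht⟩, rfl⟩
          · intro _
            exact ⟨z.1, z'.1, Relation.ReflTransGen.refl, ht, rfl, rfl⟩
      · rintro (_ | (x | z)) y hS hf
        · subst hS
          rcases hf with hf | hf
          · exact hfin P.init Q.init hinit hf
          · exact hf
        · exact hfin x y hS hf
        · subst hS; exact hf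
    · -- Sim Q (P.sum Q)
      refine ⟨fun y s => (y = Q.init ∧ s = none) ∨
          ∃ h : y ≠ Q.init, s = some (Sum.inr ⟨y, h⟩), ⟨Or.inl ⟨rfl, rfl⟩, ?_, ?_⟩, ?_⟩
      · rintro y s a y' hS ht
        have hy' : y' ≠ Q.init := fun h => hQi y a (h ▸ ht)
        rcases hS with ⟨rfl, rfl⟩ | ⟨h, rfl⟩
        · constructor
          · intro hi
            refine ⟨some (Sum.inr ⟨y', hy'⟩), Relation.ReflTransGen.single ⟨a, hi, ht⟩,
              Or.inr ⟨hy', rfl⟩⟩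
          · intro _
            exact ⟨none, some (Sum.inr ⟨y', hy'⟩), Relation.ReflTransGen.refl, ht,
              Or.inl ⟨rfl, rfl⟩, Or.inr ⟨hy', rfl⟩⟩
        · constructor
          · intro hi
            refine ⟨some (Sum.inr ⟨y', hy'⟩), Relation.ReflTransGen.single ⟨a, hi, ht⟩,
              Or.inr ⟨hy', rfl⟩⟩
          · intro _
            exact ⟨some (Sum.inr ⟨y, h⟩), some (Sum.inr ⟨y', hy'⟩),
              Relation.ReflTransGen.refl, ht, Or.inr ⟨h, rfl⟩, Or.inr ⟨hy', rfl⟩⟩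
      · rintro y s hS hf
        rcases hS with ⟨rfl, rfl⟩ | ⟨h, rfl⟩
        · exact Or.inr hf
        · exact hf
      · rintro s (⟨-, rfl⟩ | ⟨h, hs⟩)
        · rfl
        · exact absurd rfl h
  · rintro ⟨⟨T, ⟨Tinit, Ttrans, Tfin⟩, Troot⟩, -⟩
    refine ⟨fun x y => (x = P.init ∧ y = Q.init) ∨
        ∃ h : x ≠ P.init, T (some (Sum.inl ⟨x, h⟩)) y, ⟨Or.inl ⟨rfl, rfl⟩, ?_, ?_⟩, ?_⟩
    · rintro x y a x' hS ht
      have hx' : x' ≠ P.init := fun h => hPi x a (h ▸ ht)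
      rcases hS with ⟨rfl, rfl⟩ | ⟨h, hT⟩
      · have ht' : (P.sum Q).trans none a (some (Sum.inl ⟨x', hx'⟩)) := ht
        have := Ttrans none Q.init a (some (Sum.inl ⟨x', hx'⟩)) Tinit ht'
        constructor
        · intro hi
          obtain ⟨y', hr, hT'⟩ := this.1 hi
          exact ⟨y', hr, Or.inr ⟨hx', hT'⟩⟩
        · intro hi
          obtain ⟨y₁, y', hr, htr, hT₁, hT'⟩ := this.2 hi
          exact ⟨y₁, y', hr, htr, Or.inl ⟨rfl, Troot y₁ hT₁⟩, Or.inr ⟨hx', hT'⟩⟩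
      · have ht' : (P.sum Q).trans (some (Sum.inl ⟨x, h⟩)) a (some (Sum.inl ⟨x', hx'⟩)) := ht
        have := Ttrans (some (Sum.inl ⟨x, h⟩)) y a (some (Sum.inl ⟨x', hx'⟩)) hT ht'
        constructor
        · intro hi
          obtain ⟨y', hr, hT'⟩ := this.1 hi
          exact ⟨y', hr, Or.inr ⟨hx', hT'⟩⟩
        · intro hi
          obtain ⟨y₁, y', hr, htr, hT₁, hT'⟩ := this.2 hi
          exact ⟨y₁, y', hr, htr, Or.inr ⟨h, hT₁⟩, Or.inr ⟨hx', hT'⟩⟩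
    · rintro x y (⟨rfl, rfl⟩ | ⟨h, hT⟩) hf
      · exact Tfin none Q.init Tinit (Or.inl hf)
      · exact Tfin (some (Sum.inl ⟨x, h⟩)) y hT hf
    · rintro y (⟨-, rfl⟩ | ⟨h, hT⟩)
      · rfl
      · exact absurd rfl h
end
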